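/- arXiv:2409.09303 — 2 statements merged into one kernel-verified Lean document; each statement's English description precedes it below -/
import Mathlib

section
/- Let H be a real separable Hilbert space and let μ be a centered Borel probability measure on H with ∫_H ‖u‖² dμ(u) < ∞ and such that there exists c > 0 with ∫_H ⟨h,u⟩⁴ dμ(u) ≤ c² (∫_H ⟨h,u⟩² dμ(u))² for every h ∈ H. Let S be the covariance operator of μ and {e_k, k ≥ 1} an orthonormal eigenbasis of S. If a family {μ_α, α ∈ Θ} of Borel probability measures on H is such that each μ_α is finitely absolutely continuous with respect to μ with constants (c_n^α)_{n≥0} and sup_{α∈Θ} c₂^α < ∞, then: (i) for every α, Σ_{k=1}^∞ ∫_H ⟨e_k,u⟩² dμ_α(du) ≤ c · c₂^α · Σ_{k=1}^∞ ∫_H ⟨e_k,u⟩² dμ(du); (ii) sup_{α∈Θ} Σ_{k=n}^∞ ∫_H ⟨e_k,u⟩² dμ_α(du) → 0 as n → ∞. -/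
open MeasureTheory ProbabilityTheory Real Filter
open scoped NNReal ENNReal RealInnerProductSpace

noncomputable section

/-- `ν` is finitely absolutely continuous with respect to `μ` with constants `c`. -/
def FinAbsCont {B : Type*} [NormedAddCommGroup B] [NormedSpace ℝ B] [MeasurableSpace B]
    (ν μ : Measure B) (c : ℕ → ℝ) : Prop :=
  ∀ (n : ℕ) (P : MvPolynomial (Fin n) ℝ), P.totalDegree ≤ n →
    ∀ ℓ : Fin n → (B →L[ℝ] ℝ),
      |∫ ω, MvPolynomial.eval (fun i => ℓ i ω) P ∂ν| ≤
        c n * (∫ ω, (MvPolynomial.eval (fun i => ℓ i ω) P) ^ 2 ∂μ) ^ (1 / 2 : ℝ)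

/-!
Taking `P = X₀²` and `ℓ = ⟪e k, ·⟫` in finite absolute continuity gives
`∫ ⟪e k, u⟫² dμ_α ≤ c₂^α (∫ ⟪e k, u⟫⁴ dμ)^{1/2} ≤ c · c₂^α ∫ ⟪e k, u⟫² dμ`, the last step by the
fourth moment comparison. Summing over `k` gives (i), the right-hand side being finite by Bessel's
inequality `∑ₖ ⟪e k, u⟫² ≤ ‖u‖²`. For (ii), the termwise bound with `c₂^α` replaced by
`sup_α c₂^α` dominates every tail uniformly in `α` by a tail of a convergent series.
-/

namespace FinAbsCont

variable {B : Type*} [NormedAddCommGroup B] [NormedSpace ℝ B] [MeasurableSpace B]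
  {ν μ : Measure B} {C : ℕ → ℝ}

theorem nonneg (h : FinAbsCont ν μ C) [IsProbabilityMeasure μ] (n : ℕ) : 0 ≤ C n := by
  have := h n 1 (by simp) 0
  simp only [map_one, one_pow, integral_const, probReal_univ, smul_eq_mul, mul_one,
    Real.one_rpow] at this
  exact (abs_nonneg _).trans this

theorem integral_sq_le (h : FinAbsCont ν μ C) (ℓ : B →L[ℝ] ℝ) :
    ∫ ω, ℓ ω ^ 2 ∂ν ≤ C 2 * √(∫ ω, ℓ ω ^ 4 ∂μ) := by
  have := h 2 (MvPolynomial.X 0 ^ 2) (by simp [MvPolynomial.totalDegree_X_pow]) fun _ => ℓ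
  simp only [map_pow, MvPolynomial.eval_X, ← pow_mul] at this
  rw [Real.sqrt_eq_rpow]
  exact (le_abs_self _).trans this

theorem integral_sq_le_of_integral_pow_four_le (h : FinAbsCont ν μ C) [IsProbabilityMeasure μ]
    {c : ℝ} (hc : 0 ≤ c) {ℓ : B →L[ℝ] ℝ}
    (h4 : ∫ ω, ℓ ω ^ 4 ∂μ ≤ c ^ 2 * (∫ ω, ℓ ω ^ 2 ∂μ) ^ 2) :
    ∫ ω, ℓ ω ^ 2 ∂ν ≤ c * C 2 * ∫ ω, ℓ ω ^ 2 ∂μ := by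
  have hvar : 0 ≤ ∫ ω, ℓ ω ^ 2 ∂μ := integral_nonneg fun _ => sq_nonneg _
  calc ∫ ω, ℓ ω ^ 2 ∂ν ≤ C 2 * √(∫ ω, ℓ ω ^ 4 ∂μ) := h.integral_sq_le ℓ
    _ ≤ C 2 * √((c * ∫ ω, ℓ ω ^ 2 ∂μ) ^ 2) := by
        have := h.nonneg 2
        gcongr
        rwa [mul_pow]
    _ = c * C 2 * ∫ ω, ℓ ω ^ 2 ∂μ := by
        rw [Real.sqrt_sq (mul_nonneg hc hvar)]
        ring

end FinAbsCont

section Bessel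

variable {H : Type*} [NormedAddCommGroup H] [InnerProductSpace ℝ H] [MeasurableSpace H]
  [BorelSpace H] {μ : Measure H}

theorem integrable_inner_sq (hmom : Integrable (fun u => ‖u‖ ^ 2) μ) (v : H) :
    Integrable (fun u => ⟪v, u⟫ ^ 2) μ := by
  refine (hmom.const_mul (‖v‖ ^ 2)).mono'
    ((innerSL ℝ v).continuous.pow 2).aestronglyMeasurable (ae_of_all _ fun u => ?_)
  rw [norm_pow, Real.norm_eq_abs, ← mul_pow]
  exact pow_le_pow_left₀ (abs_nonneg _) (abs_real_inner_le_norm v u) 2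

theorem summable_integral_inner_sq {ι : Type*} {e : ι → H} (he : Orthonormal ℝ e)
    (hmom : Integrable (fun u => ‖u‖ ^ 2) μ) :
    Summable fun i => ∫ u, ⟪e i, u⟫ ^ 2 ∂μ := by
  refine summable_of_sum_le (c := ∫ u, ‖u‖ ^ 2 ∂μ)
    (fun i => integral_nonneg fun _ => sq_nonneg _) fun s => ?_
  rw [← integral_finsetSum s fun i _ => integrable_inner_sq hmom (e i)]
  refine integral_mono (integrable_finsetSum s fun i _ => integrable_inner_sq hmom (e i))
    hmom fun u => ?_
  simpa only [Real.norm_eq_abs, sq_abs] using he.sum_inner_products_le u (s := s)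

end Bessel

theorem tendsto_iSup_tsum_nat_add_of_le {ι : Type*} {f : ι → ℕ → ℝ} {g : ℕ → ℝ}
    (hf : ∀ i k, 0 ≤ f i k) (hfg : ∀ i k, f i k ≤ g k) (hg : Summable g) (hg₀ : ∀ k, 0 ≤ g k) :
    Tendsto (fun n => ⨆ i, ∑' k, f i (k + n)) atTop (nhds 0) := by
  refine squeeze_zero (fun n => Real.iSup_nonneg fun i => tsum_nonneg fun k => hf i _)
    (fun n => Real.iSup_le (fun i => ?_) (tsum_nonneg fun k => hg₀ _)) (tendsto_sum_nat_add g)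
  exact Summable.tsum_le_tsum (fun k => hfg i _)
    ((summable_nat_add_iff n).2 (hg.of_nonneg_of_le (hf i) (hfg i))) ((summable_nat_add_iff n).2 hg)

theorem second_moment_bounds_of_finAbsCont_general
    {H : Type*} [NormedAddCommGroup H] [InnerProductSpace ℝ H]
    [MeasurableSpace H] [BorelSpace H]
    (μ : Measure H) [IsProbabilityMeasure μ]
    -- μ has a finite second moment of the norm
    (hmom : Integrable (fun u => ‖u‖ ^ 2) μ)
    -- the fourth moment comparison (consequence of polynomial non-degeneracy)
    (c : ℝ) (hc : 0 < c)
    (h4 : ∀ h : H, ∫ u, ⟪h, u⟫ ^ 4 ∂μ ≤ c ^ 2 * (∫ u, ⟪h, u⟫ ^ 2 ∂μ) ^ 2)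
    (e : ℕ → H) (he : Orthonormal ℝ e)
    {Θ : Type*} (μα : Θ → Measure H)
    (cα : Θ → ℕ → ℝ)
    (hfac : ∀ α : Θ, FinAbsCont (μα α) μ (cα α))
    (hsup2 : BddAbove (Set.range fun α => cα α 2)) :
    (∀ α : Θ, ∑' k : ℕ, ∫ u, ⟪e k, u⟫ ^ 2 ∂(μα α) ≤
        c * cα α 2 * ∑' k : ℕ, ∫ u, ⟪e k, u⟫ ^ 2 ∂μ) ∧
    Tendsto (fun n : ℕ => ⨆ α : Θ, ∑' k : ℕ, ∫ u, ⟪e (k + n), u⟫ ^ 2 ∂(μα α))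
      atTop (nhds 0) := by
  have hg : Summable fun k => ∫ u, ⟪e k, u⟫ ^ 2 ∂μ := summable_integral_inner_sq he hmom
  have hg₀ : ∀ k, 0 ≤ ∫ u, ⟪e k, u⟫ ^ 2 ∂μ := fun k => integral_nonneg fun _ => sq_nonneg _
  have hf₀ : ∀ α k, 0 ≤ ∫ u, ⟪e k, u⟫ ^ 2 ∂(μα α) := fun α k =>
    integral_nonneg fun _ => sq_nonneg _
  have hbound : ∀ α k, ∫ u, ⟪e k, u⟫ ^ 2 ∂(μα α) ≤ c * cα α 2 * ∫ u, ⟪e k, u⟫ ^ 2 ∂μ :=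
    fun α k => by
      simpa only [innerSL_apply_apply] using
        (hfac α).integral_sq_le_of_integral_pow_four_le hc.le (ℓ := innerSL ℝ (e k))
          (by simpa only [innerSL_apply_apply] using h4 (e k))
  have hM : ∀ α, cα α 2 ≤ ⨆ α, cα α 2 := le_ciSup hsup2
  have hM₀ : 0 ≤ ⨆ α, cα α 2 := Real.iSup_nonneg fun α => (hfac α).nonneg 2
  refine ⟨fun α => ?_, tendsto_iSup_tsum_nat_add_of_le hf₀ (fun α k => (hbound α k).trans ?_)
    (hg.mul_left (c * ⨆ α, cα α 2)) fun k => by have := hg₀ k; positivity⟩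
  · calc ∑' k, ∫ u, ⟪e k, u⟫ ^ 2 ∂(μα α) ≤ ∑' k, c * cα α 2 * ∫ u, ⟪e k, u⟫ ^ 2 ∂μ :=
          Summable.tsum_le_tsum (hbound α)
            ((hg.mul_left _).of_nonneg_of_le (hf₀ α) (hbound α)) (hg.mul_left _)
      _ = c * cα α 2 * ∑' k, ∫ u, ⟪e k, u⟫ ^ 2 ∂μ := tsum_mul_left
  · have := hg₀ k
    gcongr
    exact hM α

/-- uniform control of the second weak moments along an orthonormal
eigenbasis of the covariance operator of `μ`, for a family `μα` uniformly finitely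
absolutely continuous with respect to `μ`. -/
theorem second_moment_bounds_of_finAbsCont
    {H : Type*} [NormedAddCommGroup H] [InnerProductSpace ℝ H] [CompleteSpace H]
    [TopologicalSpace.SeparableSpace H] [MeasurableSpace H] [BorelSpace H]
    (μ : Measure H) [IsProbabilityMeasure μ]
    -- μ has a finite second moment of the norm
    (hmom : Integrable (fun u => ‖u‖ ^ 2) μ)
    -- μ is centered
    (hcen : ∀ h : H, ∫ u, ⟪h, u⟫ ∂μ = 0)
    -- the fourth moment comparison (consequence of polynomial non-degeneracy)
    (c : ℝ) (hc : 0 < c)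
    (h4 : ∀ h : H, ∫ u, ⟪h, u⟫ ^ 4 ∂μ ≤ c ^ 2 * (∫ u, ⟪h, u⟫ ^ 2 ∂μ) ^ 2)
    -- S is the covariance operator of μ
    (S : H →L[ℝ] H)
    (hS : ∀ g h : H, ⟪S g, h⟫ = ∫ u, ⟪g, u⟫ * ⟪h, u⟫ ∂μ)
    -- (e k) is an orthonormal eigenbasis of S
    (e : ℕ → H) (he : Orthonormal ℝ e)
    (heig : ∀ k : ℕ, ∃ lam : ℝ, S (e k) = lam • e k)
    (hbasis : (Submodule.span ℝ (Set.range e)).topologicalClosure = ⊤)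
    {Θ : Type*} [Nonempty Θ] (μα : Θ → Measure H) [∀ α, IsProbabilityMeasure (μα α)]
    -- each μα has all weak moments
    (hαmom : ∀ (α : Θ) (ℓ : H →L[ℝ] ℝ) (k : ℕ), Integrable (fun u => |ℓ u| ^ k) (μα α))
    (cα : Θ → ℕ → ℝ)
    (hfac : ∀ α : Θ, FinAbsCont (μα α) μ (cα α))
    (hsup2 : BddAbove (Set.range fun α => cα α 2)) :
    (∀ α : Θ, ∑' k : ℕ, ∫ u, ⟪e k, u⟫ ^ 2 ∂(μα α) ≤
        c * cα α 2 * ∑' k : ℕ, ∫ u, ⟪e k, u⟫ ^ 2 ∂μ) ∧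
    Tendsto (fun n : ℕ => ⨆ α : Θ, ∑' k : ℕ, ∫ u, ⟪e (k + n), u⟫ ^ 2 ∂(μα α))
      atTop (nhds 0) :=
  second_moment_bounds_of_finAbsCont_general μ hmom c hc h4 e he μα cα hfac hsup2
end
end

section
/- Let B = C([0,1], ℝ^d) and let μ be a centered Borel probability measure on B such that ∫_B ‖u‖_∞^k dμ(u) < ∞ for all k, for every m ≥ 1 there exists a_m > 0 with ∫_B φ(u)^{2m} dμ(u) ≤ a_m (∫_B φ(u)² dμ(u))^m for every φ ∈ B*, and there exist c > 0, γ > 0 with ∫_B ‖u(t₂) − u(t₁)‖² dμ(u) ≤ c |t₂ − t₁|^γ for all t₁, t₂ ∈ [0,1]. Let {μ_α, α ∈ Θ} be a family of Borel probability measures on B, each with finite moments of all orders of the norm, each finitely absolutely continuous with respect to μ with constants (c_n^α)_{n≥0}, with sup_{α∈Θ} c_n^α < ∞ for every n. Then: (i) sup_{α∈Θ} ∫_B ‖u(0)‖² dμ_α(du) < ∞; and (ii) for every integer m₀ with m₀γ > 1 there exist D > 0 and β > 0 such that for all t₁, t₂ ∈ [0,1], sup_{α∈Θ} ∫_B ‖u(t₂)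 − u(t₁)‖^{2m₀} dμ_α(du) ≤ D |t₂ − t₁|^{1+β}. -/
open MeasureTheory ProbabilityTheory Real Filter
open scoped NNReal ENNReal

noncomputable section

/-- The space `C([0,1], ℝ^d)` with the supremum norm. -/
abbrev PathSpace (d : ℕ) := C(Set.Icc (0 : ℝ) 1, EuclideanSpace ℝ (Fin d))

instance (d : ℕ) : MeasurableSpace (PathSpace d) := borel _
instance (d : ℕ) : BorelSpace (PathSpace d) := ⟨rfl⟩

lemma euclid_sq {d : ℕ} (x : EuclideanSpace ℝ (Fin d)) : ‖x‖ ^ 2 = ∑ i, x i ^ 2 := by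
  rw [EuclideanSpace.norm_eq, Real.sq_sqrt (by positivity)]
  simp [Real.norm_eq_abs, sq_abs]

lemma euclid_coord_le {d : ℕ} (x : EuclideanSpace ℝ (Fin d)) (i : Fin d) : |x i| ≤ ‖x‖ := by
  rw [← Real.sqrt_sq_eq_abs, EuclideanSpace.norm_eq]
  apply Real.sqrt_le_sqrt
  calc x i ^ 2 = ‖x i‖ ^ 2 := by simp [Real.norm_eq_abs, sq_abs]
  _ ≤ _ := Finset.single_le_sum (f := fun j => ‖x j‖ ^ 2) (fun j _ => by positivity)
      (Finset.mem_univ i)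

lemma integ_aux {d : ℕ} (ν : Measure (PathSpace d)) (k : ℕ)
    (hν : Integrable (fun u => ‖u‖ ^ k) ν) {f : PathSpace d → ℝ} (hf : Continuous f)
    (C : ℝ) (h : ∀ u, |f u| ≤ C * ‖u‖ ^ k) : Integrable f ν :=
  (hν.const_mul C).mono' hf.aestronglyMeasurable
    (Eventually.of_forall (by simpa [Real.norm_eq_abs] using h))

lemma pad_sum {d k : ℕ} {B : Type*} [NormedAddCommGroup B] [NormedSpace ℝ B]
    (ψ : Fin d → (B →L[ℝ] ℝ)) (u : B) :
    (∑ j : Fin (d + k), ((if h : (j : ℕ) < d then ψ ⟨j, h⟩ else 0) u) ^ 2) =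
      ∑ i : Fin d, (ψ i u) ^ 2 := by
  set g : ℕ → ℝ := fun m => ((if h : m < d then ψ ⟨m, h⟩ else 0) u) ^ 2 with hg
  have h1 : (∑ j : Fin (d + k), ((if h : (j : ℕ) < d then ψ ⟨j, h⟩ else 0) u) ^ 2)
      = ∑ m ∈ Finset.range (d + k), g m := Fin.sum_univ_eq_sum_range g (d + k)
  have h2 : ∑ m ∈ Finset.range (d + k), g m = ∑ m ∈ Finset.range d, g m := by
    refine (Finset.sum_subset (Finset.range_subset_range.2 (by omega)) ?_).symm
    intro m _ hm
    have : ¬ m < d := by simpa using hm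
    simp [hg, this]
  have h3 : ∑ m ∈ Finset.range d, g m = ∑ i : Fin d, (ψ i u) ^ 2 := by
    rw [← Fin.sum_univ_eq_sum_range g d]
    exact Finset.sum_congr rfl fun i _ => by simp [hg, i.isLt]
  rw [h1, h2, h3]

lemma finabs_apply {B : Type*} [NormedAddCommGroup B] [NormedSpace ℝ B] [MeasurableSpace B]
    {ν μ : Measure B} {c : ℕ → ℝ} (h : FinAbsCont ν μ c) (d m₀ : ℕ)
    (ψ : Fin d → (B →L[ℝ] ℝ)) :
    |∫ ω, (∑ i, (ψ i ω) ^ 2) ^ m₀ ∂ν| ≤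
      c (d + 2 * m₀) * (∫ ω, ((∑ i, (ψ i ω) ^ 2) ^ m₀) ^ 2 ∂μ) ^ (1 / 2 : ℝ) := by
  set n := d + 2 * m₀ with hn
  have hdeg : ((∑ j : Fin n, MvPolynomial.X j ^ 2 : MvPolynomial (Fin n) ℝ) ^ m₀).totalDegree
      ≤ n := by
    refine (MvPolynomial.totalDegree_pow _ _).trans ?_
    have hs : (∑ j : Fin n, MvPolynomial.X j ^ 2 : MvPolynomial (Fin n) ℝ).totalDegree ≤ 2 := by
      refine (MvPolynomial.totalDegree_finset_sum _ _).trans ?_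
      exact Finset.sup_le fun j _ => by simp [MvPolynomial.totalDegree_X_pow]
    calc m₀ * (∑ j : Fin n, MvPolynomial.X j ^ 2 : MvPolynomial (Fin n) ℝ).totalDegree
        ≤ m₀ * 2 := Nat.mul_le_mul_left _ hs
    _ ≤ n := by omega
  have happ := h n ((∑ j : Fin n, MvPolynomial.X j ^ 2) ^ m₀) hdeg
    (fun j => if h : (j : ℕ) < d then ψ ⟨j, h⟩ else 0)
  have heval : ∀ ω : B,
      MvPolynomial.eval (fun j : Fin n => (if h : (j : ℕ) < d then ψ ⟨j, h⟩ else 0) ω)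
        ((∑ j : Fin n, MvPolynomial.X j ^ 2) ^ m₀) = (∑ i, (ψ i ω) ^ 2) ^ m₀ := by
    intro ω
    rw [map_pow]
    congr 1
    rw [map_sum]
    simp only [map_pow, MvPolynomial.eval_X]
    exact pad_sum ψ ω
  simpa only [heval] using happ

/-- for a family of probability measures on `C([0,1],ℝ^d)` uniformly
finitely absolutely continuous w.r.t. a centered polynomially non-degenerate measure `μ`
with Hölder second moments of increments: (i) the second moments of the values at `0`
are uniformly bounded, and (ii) for every `m₀` with `m₀ γ > 1` the `2m₀`-moments of the
increments are uniformly Hölder of order `1 + β` for some `β > 0`. -/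
theorem uniform_moment_bounds_of_finAbsCont_pathSpace
    (d : ℕ) (μ : Measure (PathSpace d)) [IsProbabilityMeasure μ]
    (hmom : ∀ k : ℕ, Integrable (fun u => ‖u‖ ^ k) μ)
    (hcen : ∀ ℓ : PathSpace d →L[ℝ] ℝ, ∫ u, ℓ u ∂μ = 0)
    (a : ℕ → ℝ) (ha : ∀ m : ℕ, 1 ≤ m → 0 < a m)
    (hcmp : ∀ (m : ℕ), 1 ≤ m → ∀ φ : PathSpace d →L[ℝ] ℝ,
      ∫ u, φ u ^ (2 * m) ∂μ ≤ a m * (∫ u, φ u ^ 2 ∂μ) ^ m)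
    (c γ : ℝ) (hc : 0 < c) (hγ : 0 < γ)
    (hinc : ∀ t₁ t₂ : Set.Icc (0 : ℝ) 1,
      ∫ u, ‖u t₂ - u t₁‖ ^ 2 ∂μ ≤ c * |(t₂ : ℝ) - (t₁ : ℝ)| ^ γ)
    {Θ : Type*} (μα : Θ → Measure (PathSpace d)) [∀ α, IsProbabilityMeasure (μα α)]
    (hαmom : ∀ (α : Θ) (k : ℕ), Integrable (fun u => ‖u‖ ^ k) (μα α))
    (cα : Θ → ℕ → ℝ)
    (hfac : ∀ α : Θ, FinAbsCont (μα α) μ (cα α))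
    (hsup : ∀ n : ℕ, BddAbove (Set.range fun α => cα α n)) :
    (∃ C : ℝ, ∀ α : Θ, ∫ u, ‖u 0‖ ^ 2 ∂(μα α) ≤ C) ∧
    (∀ m₀ : ℕ, 1 ≤ m₀ → 1 < (m₀ : ℝ) * γ →
      ∃ D : ℝ, 0 < D ∧ ∃ β : ℝ, 0 < β ∧
        ∀ (t₁ t₂ : Set.Icc (0 : ℝ) 1) (α : Θ),
          ∫ u, ‖u t₂ - u t₁‖ ^ (2 * m₀) ∂(μα α) ≤
            D * |(t₂ : ℝ) - (t₁ : ℝ)| ^ (1 + β)) := by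
  have hc1 : ∀ (α : Θ) (n : ℕ), 1 ≤ cα α n := by
    intro α n
    simpa using hfac α n 1 (by simp) 0
  constructor
  · -- Part (i)
    obtain ⟨M, hM⟩ := hsup 3
    have hMα : ∀ α, cα α 3 ≤ M := fun α => hM ⟨α, rfl⟩
    set K := ∫ u, ‖u‖ ^ 2 ∂μ with hK
    have hK0 : 0 ≤ K := integral_nonneg fun u => by positivity
    refine ⟨(d : ℝ) * (M * (a 2 * K ^ 2) ^ (1 / 2 : ℝ)), fun α => ?_⟩
    set φ : Fin d → (PathSpace d →L[ℝ] ℝ) :=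
      fun i => (EuclideanSpace.proj i).comp
        (ContinuousMap.evalCLM ℝ (0 : Set.Icc (0 : ℝ) 1)) with hφdef
    have hφ_le : ∀ i (u : PathSpace d), |φ i u| ≤ ‖u‖ := fun i u =>
      (euclid_coord_le (u 0) i).trans (ContinuousMap.norm_coe_le_norm u 0)
    have hφcont : ∀ i, Continuous fun u : PathSpace d => (φ i u) ^ 2 :=
      fun i => ((φ i).continuous).pow 2
    have hφbound : ∀ i (u : PathSpace d), |(φ i u) ^ 2| ≤ 1 * ‖u‖ ^ 2 := by
      intro i u
      rw [abs_pow, one_mul]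
      exact pow_le_pow_left₀ (abs_nonneg _) (hφ_le i u) 2
    have key : ∀ i, ∫ u, (φ i u) ^ 2 ∂(μα α) ≤ M * (a 2 * K ^ 2) ^ (1 / 2 : ℝ) := by
      intro i
      have happ := finabs_apply (hfac α) 1 1 (fun _ => φ i)
      simp only [Fin.sum_univ_one, pow_one] at happ
      norm_num at happ
      have hint2 : Integrable (fun u => (φ i u) ^ 2) μ :=
        integ_aux μ 2 (hmom 2) (hφcont i) 1 (hφbound i)
      have h2μ : ∫ u, (φ i u) ^ 2 ∂μ ≤ K := by
        refine integral_mono hint2 (hmom 2) fun u => ?_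
        have := hφbound i u
        rw [one_mul] at this
        exact (le_abs_self _).trans this
      have h4 : ∫ u, ((φ i u) ^ 2) ^ 2 ∂μ ≤ a 2 * K ^ 2 := by
        calc ∫ u, ((φ i u) ^ 2) ^ 2 ∂μ = ∫ u, (φ i u) ^ (2 * 2) ∂μ := by
              refine integral_congr_ae (ae_of_all _ fun u => ?_)
              exact (pow_mul _ 2 2).symm
        _ ≤ a 2 * (∫ u, (φ i u) ^ 2 ∂μ) ^ 2 := hcmp 2 (by norm_num) (φ i)
        _ ≤ a 2 * K ^ 2 := by
              have h0 : 0 ≤ ∫ u, (φ i u) ^ 2 ∂μ := integral_nonneg fun u => by positivity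
              exact mul_le_mul_of_nonneg_left
                (pow_le_pow_left₀ h0 h2μ 2) (ha 2 (by norm_num)).le
      have hQ0 : 0 ≤ ∫ u, ((φ i u) ^ 2) ^ 2 ∂μ := integral_nonneg fun u => by positivity
      calc ∫ u, (φ i u) ^ 2 ∂(μα α)
          = |∫ u, (φ i u) ^ 2 ∂(μα α)| :=
            (abs_of_nonneg (integral_nonneg fun u => by positivity)).symm
      _ ≤ cα α 3 * (∫ u, ((φ i u) ^ 2) ^ 2 ∂μ) ^ (1 / 2 : ℝ) := happ
      _ ≤ M * (a 2 * K ^ 2) ^ (1 / 2 : ℝ) :=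
            mul_le_mul (hMα α) (Real.rpow_le_rpow hQ0 h4 (by norm_num))
              (Real.rpow_nonneg hQ0 _) (zero_le_one.trans ((hc1 α 3).trans (hMα α)))
    have hrw : ∫ u, ‖u 0‖ ^ 2 ∂(μα α) = ∑ i, ∫ u, (φ i u) ^ 2 ∂(μα α) := by
      calc ∫ u, ‖u 0‖ ^ 2 ∂(μα α) = ∫ u, ∑ i, (φ i u) ^ 2 ∂(μα α) :=
            integral_congr_ae (ae_of_all _ fun u => euclid_sq (u 0))
      _ = ∑ i, ∫ u, (φ i u) ^ 2 ∂(μα α) :=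
            integral_finset_sum _ fun i _ =>
              integ_aux (μα α) 2 (hαmom α 2) (hφcont i) 1 (hφbound i)
    rw [hrw]
    calc ∑ i, ∫ u, (φ i u) ^ 2 ∂(μα α)
        ≤ ∑ _i : Fin d, M * (a 2 * K ^ 2) ^ (1 / 2 : ℝ) := Finset.sum_le_sum fun i _ => key i
    _ = (d : ℝ) * (M * (a 2 * K ^ 2) ^ (1 / 2 : ℝ)) := by
        rw [Finset.sum_const, Finset.card_univ, Fintype.card_fin, nsmul_eq_mul]
  · -- Part (ii)
    intro m₀ hm₀ hmγ
    obtain ⟨M, hM⟩ := hsup (d + 2 * m₀)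
    have hMα : ∀ α, cα α (d + 2 * m₀) ≤ M := fun α => hM ⟨α, rfl⟩
    set M' := max M 1 with hM'
    have hM'pos : (0 : ℝ) < M' := lt_of_lt_of_le one_pos (le_max_right _ _)
    have ha' := ha (2 * m₀) (by omega)
    set K₀ : ℝ := ((d : ℝ) + 1) ^ (2 * m₀ + 1) * a (2 * m₀) * c ^ (2 * m₀) with hK₀
    have hK₀pos : 0 < K₀ := by positivity
    refine ⟨M' * K₀ ^ (1 / 2 : ℝ), by positivity, (m₀ : ℝ) * γ - 1, by linarith, ?_⟩
    intro t₁ t₂ α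
    set β : ℝ := (m₀ : ℝ) * γ - 1 with hβ
    set T : ℝ := |(t₂ : ℝ) - (t₁ : ℝ)| with hT
    have hT0 : 0 ≤ T := abs_nonneg _
    set ψ : Fin d → (PathSpace d →L[ℝ] ℝ) := fun i =>
      (EuclideanSpace.proj i).comp (ContinuousMap.evalCLM ℝ t₂) -
      (EuclideanSpace.proj i).comp (ContinuousMap.evalCLM ℝ t₁) with hψdef
    have hψapp : ∀ i (u : PathSpace d), ψ i u = (u t₂ - u t₁) i := fun i u => rfl
    have hΔle : ∀ u : PathSpace d, ‖u t₂ - u t₁‖ ≤ 2 * ‖u‖ := by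
      intro u
      have h1 := ContinuousMap.norm_coe_le_norm u t₁
      have h2 := ContinuousMap.norm_coe_le_norm u t₂
      calc ‖u t₂ - u t₁‖ ≤ ‖u t₂‖ + ‖u t₁‖ := norm_sub_le _ _
      _ ≤ 2 * ‖u‖ := by linarith
    have hψle : ∀ i (u : PathSpace d), |ψ i u| ≤ 2 * ‖u‖ := by
      intro i u
      rw [hψapp i u]
      exact (euclid_coord_le _ i).trans (hΔle u)
    have hsum : ∀ u : PathSpace d, (∑ i, (ψ i u) ^ 2) = ‖u t₂ - u t₁‖ ^ 2 := by
      intro u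
      rw [euclid_sq (u t₂ - u t₁)]
      exact Finset.sum_congr rfl fun i _ => by rw [hψapp]
    have heq : ∀ u : PathSpace d,
        (∑ i, (ψ i u) ^ 2) ^ m₀ = ‖u t₂ - u t₁‖ ^ (2 * m₀) := by
      intro u
      rw [hsum u, ← pow_mul]
    -- integrability facts over μ
    have hψint : ∀ (i : Fin d) (k : ℕ), Integrable (fun u => (ψ i u) ^ k) μ := by
      intro i k
      refine integ_aux μ k (hmom k) (((ψ i).continuous).pow k) (2 ^ k) fun u => ?_
      rw [abs_pow]
      calc |ψ i u| ^ k ≤ (2 * ‖u‖) ^ k := pow_le_pow_left₀ (abs_nonneg _) (hψle i u) k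
      _ = 2 ^ k * ‖u‖ ^ k := mul_pow _ _ _
    have hΔcont : Continuous fun u : PathSpace d => ‖u t₂ - u t₁‖ :=
      ((ContinuousEvalConst.continuous_eval_const t₂).sub
        (ContinuousEvalConst.continuous_eval_const t₁)).norm
    have hΔint : ∀ k : ℕ, Integrable (fun u => ‖u t₂ - u t₁‖ ^ k) μ := by
      intro k
      refine integ_aux μ k (hmom k) (hΔcont.pow k) (2 ^ k) fun u => ?_
      rw [abs_pow, abs_norm]
      calc ‖u t₂ - u t₁‖ ^ k ≤ (2 * ‖u‖) ^ k := pow_le_pow_left₀ (norm_nonneg _) (hΔle u) k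
      _ = 2 ^ k * ‖u‖ ^ k := mul_pow _ _ _
    -- second moment bound for each coordinate
    have hψ2 : ∀ i : Fin d, ∫ u, (ψ i u) ^ 2 ∂μ ≤ c * T ^ γ := by
      intro i
      refine le_trans ?_ (hinc t₁ t₂)
      refine integral_mono (hψint i 2) (hΔint 2) fun u => ?_
      calc (ψ i u) ^ 2 = |ψ i u| ^ 2 := (sq_abs _).symm
      _ ≤ ‖u t₂ - u t₁‖ ^ 2 := by
          refine pow_le_pow_left₀ (abs_nonneg _) ?_ 2
          rw [hψapp i u]
          exact euclid_coord_le _ i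
    -- the key μ-integral bound
    have hX : ∫ u, (‖u t₂ - u t₁‖ ^ (2 * m₀)) ^ 2 ∂μ ≤ K₀ * T ^ (γ * (2 * m₀ : ℕ)) := by
      have hpt : ∀ u : PathSpace d,
          (‖u t₂ - u t₁‖ ^ (2 * m₀)) ^ 2 ≤
            (d : ℝ) ^ (2 * m₀ - 1) * ∑ i : Fin d, (ψ i u) ^ (2 * (2 * m₀)) := by
        intro u
        have h1 : (‖u t₂ - u t₁‖ ^ (2 * m₀)) ^ 2 = (∑ i : Fin d, (ψ i u) ^ 2) ^ (2 * m₀) := by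
          rw [hsum u, ← pow_mul, ← pow_mul]
          congr 1
          ring
        rw [h1]
        have h2 := pow_sum_le_card_mul_sum_pow
          (s := (Finset.univ : Finset (Fin d))) (f := fun i => (ψ i u) ^ 2)
          (fun i _ => by positivity) (2 * m₀ - 1)
        rw [show 2 * m₀ - 1 + 1 = 2 * m₀ from by omega] at h2
        refine h2.trans ?_
        rw [Finset.card_univ, Fintype.card_fin]
        refine mul_le_mul_of_nonneg_left ?_ (by positivity)
        refine le_of_eq (Finset.sum_congr rfl fun i _ => ?_)
        rw [← pow_mul]
      have hint1 : Integrable (fun u => (‖u t₂ - u t₁‖ ^ (2 * m₀)) ^ 2) μ := by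
        refine (hΔint (2 * m₀ * 2)).congr (ae_of_all _ fun u => ?_)
        exact pow_mul _ (2 * m₀) 2
      have hint2 : Integrable
          (fun u => (d : ℝ) ^ (2 * m₀ - 1) * ∑ i : Fin d, (ψ i u) ^ (2 * (2 * m₀))) μ :=
        (integrable_finset_sum _ fun i _ => hψint i (2 * (2 * m₀))).const_mul _
      calc ∫ u, (‖u t₂ - u t₁‖ ^ (2 * m₀)) ^ 2 ∂μ
          ≤ ∫ u, (d : ℝ) ^ (2 * m₀ - 1) * ∑ i : Fin d, (ψ i u) ^ (2 * (2 * m₀)) ∂μ :=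
            integral_mono hint1 hint2 hpt
      _ = (d : ℝ) ^ (2 * m₀ - 1) * ∑ i : Fin d, ∫ u, (ψ i u) ^ (2 * (2 * m₀)) ∂μ := by
            rw [integral_const_mul, integral_finset_sum _ fun i _ => hψint i (2 * (2 * m₀))]
      _ ≤ (d : ℝ) ^ (2 * m₀ - 1) * ∑ _i : Fin d, a (2 * m₀) * (c * T ^ γ) ^ (2 * m₀) := by
            refine mul_le_mul_of_nonneg_left (Finset.sum_le_sum fun i _ => ?_) (by positivity)
            refine (hcmp (2 * m₀) (by omega) (ψ i)).trans ?_
            refine mul_le_mul_of_nonneg_left ?_ ha'.le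
            exact pow_le_pow_left₀ (integral_nonneg fun u => by positivity) (hψ2 i) _
      _ = ((d : ℝ) ^ (2 * m₀ - 1) * d) * (a (2 * m₀) * (c * T ^ γ) ^ (2 * m₀)) := by
            rw [Finset.sum_const, Finset.card_univ, Fintype.card_fin, nsmul_eq_mul]
            ring
      _ ≤ ((d : ℝ) + 1) ^ (2 * m₀ + 1) * (a (2 * m₀) * (c * T ^ γ) ^ (2 * m₀)) := by
            refine mul_le_mul_of_nonneg_right ?_ (by positivity)
            calc (d : ℝ) ^ (2 * m₀ - 1) * d = (d : ℝ) ^ (2 * m₀ - 1 + 1) := (pow_succ _ _).symm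
            _ ≤ ((d : ℝ) + 1) ^ (2 * m₀ - 1 + 1) :=
                pow_le_pow_left₀ (by positivity) (by linarith) _
            _ ≤ ((d : ℝ) + 1) ^ (2 * m₀ + 1) :=
                pow_le_pow_right₀ (by linarith) (by omega)
      _ = K₀ * T ^ (γ * (2 * m₀ : ℕ)) := by
            rw [hK₀, mul_pow, ← Real.rpow_natCast (T ^ γ) (2 * m₀), ← Real.rpow_mul hT0]
            ring
    -- apply finite absolute continuity
    have happ := finabs_apply (hfac α) d m₀ ψ
    simp only [heq] at happ
    have hXnn : 0 ≤ ∫ u, (‖u t₂ - u t₁‖ ^ (2 * m₀)) ^ 2 ∂μ :=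
      integral_nonneg fun u => by positivity
    have hrpow : (K₀ * T ^ (γ * (2 * m₀ : ℕ))) ^ (1 / 2 : ℝ) =
        K₀ ^ (1 / 2 : ℝ) * T ^ (1 + β) := by
      rw [Real.mul_rpow hK₀pos.le (Real.rpow_nonneg hT0 _), ← Real.rpow_mul hT0]
      congr 1
      rw [hβ]
      push_cast
      ring
    calc ∫ u, ‖u t₂ - u t₁‖ ^ (2 * m₀) ∂(μα α)
        = |∫ u, ‖u t₂ - u t₁‖ ^ (2 * m₀) ∂(μα α)| :=
          (abs_of_nonneg (integral_nonneg fun u => by positivity)).symm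
    _ ≤ cα α (d + 2 * m₀) * (∫ u, (‖u t₂ - u t₁‖ ^ (2 * m₀)) ^ 2 ∂μ) ^ (1 / 2 : ℝ) := happ
    _ ≤ M' * (K₀ ^ (1 / 2 : ℝ) * T ^ (1 + β)) := by
          refine mul_le_mul ((hMα α).trans (le_max_left _ _)) ?_
            (Real.rpow_nonneg hXnn _) hM'pos.le
          rw [← hrpow]
          exact Real.rpow_le_rpow hXnn hX (by norm_num)
    _ = M' * K₀ ^ (1 / 2 : ℝ) * T ^ (1 + β) := by ring
end
end
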